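/- Let G be a countable discrete group, residually finite with respect to a sequence of finite-index normal subgroups G = N₀ ⊇ N₁ ⊇ N₂ ⊇ ⋯ with ⋂_{i≥1} N_i = {1}, equipped with a proper length function and the induced left-invariant metric, each G/N_i carrying the quotient metric. Then the box space □_{N_i}G has FDC if and only if the metric family {G/N_i : i ∈ ℕ} has FDC. In particular, if G has stable FDC, then the box space □_{N_i}G has FDC. -/

import Mathlib

open Set Filter
open scoped symmDiff

namespace FDCPaper

/-! ### Proper functions `[0,∞) → ℝ` : preimages of bounded sets are bounded. -/

def ProperFn (ρ : ℝ → ℝ) : Prop :=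
  ∀ C : ℝ, ∃ M : ℝ, ∀ t : ℝ, 0 ≤ t → |ρ t| ≤ C → t ≤ M

/-! ### Length functions on groups and the induced metrics -/

structure IsLengthFunction {G : Type*} [Group G] (l : G → ℝ) : Prop where
  nonneg : ∀ g, 0 ≤ l g
  len_one : l 1 = 0
  len_inv : ∀ g, l g⁻¹ = l g
  subadd : ∀ g h, l (g * h) ≤ l g + l h
  eq_one : ∀ g, l g = 0 → g = 1
  proper : ∀ R : ℝ, {g : G | l g ≤ R}.Finite

/-- The left invariant distance induced by a length function. -/
def dl {G : Type*} [Group G] (l : G → ℝ) (g h : G) : ℝ := l (g⁻¹ * h)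

/-- The quotient distance on `G ⧸ N`:
`d([g],[h]) = inf { d_G(g n₁, h n₂) : n₁, n₂ ∈ N }`. -/
noncomputable def qdist {G : Type*} [Group G] (l : G → ℝ) (N : Subgroup G)
    (x y : G ⧸ N) : ℝ :=
  sInf {r : ℝ | ∃ g h : G, (QuotientGroup.mk g : G ⧸ N) = x ∧
    (QuotientGroup.mk h : G ⧸ N) = y ∧ r = dl l g h}

/-- The quotient length on `G ⧸ N` : `l̄([g]) = inf { l(h) : [h] = [g] }`. -/
noncomputable def qlen {G : Type*} [Group G] (l : G → ℝ) (N : Subgroup G) (x : G ⧸ N) : ℝ :=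
  sInf {r : ℝ | ∃ g : G, (QuotientGroup.mk g : G ⧸ N) = x ∧ r = l g}

/-! ### Families of subsets of a single ambient space, decompositions -/

section Single

variable {α : Type*}

/-- The open ball, for a distance function. -/
def ballS (d : α → α → ℝ) (c : α) (R : ℝ) : Set α := {x | d c x < R}

/-- An `r`-disjoint family of subsets. -/
def rDisjS (d : α → α → ℝ) (r : ℝ) (P : Set (Set α)) : Prop :=
  ∀ A ∈ P, ∀ B ∈ P, A ≠ B → ∀ x ∈ A, ∀ y ∈ B, r ≤ d x y

/-- A uniformly bounded family of subsets. -/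
def BddS (d : α → α → ℝ) (𝒴 : Set (Set α)) : Prop :=
  ∃ C : ℝ, ∀ Y ∈ 𝒴, ∀ x ∈ Y, ∀ y ∈ Y, d x y ≤ C

/-- `X = X₀ ∪ X₁` where each `Xᵢ` is an `r`-disjoint union of members of `𝒴`. -/
def PieceDecomp (d : α → α → ℝ) (r : ℝ) (X : Set α) (𝒴 : Set (Set α)) : Prop :=
  ∃ P₀ P₁ : Set (Set α),
    X = ⋃₀ P₀ ∪ ⋃₀ P₁ ∧ rDisjS d r P₀ ∧ rDisjS d r P₁ ∧ ∀ A ∈ P₀ ∪ P₁, A ∈ 𝒴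

/-- `X = X₀ ∪ X₁`, `Xᵢ = ∪ⱼ Xᵢⱼ` with `Xᵢⱼ ∈ 𝒴`, and the cover `{Xᵢⱼ}` of `X` has
Lebesgue number `≥ R`. -/
def PieceFullDecomp (d : α → α → ℝ) (R : ℝ) (X : Set α) (𝒴 : Set (Set α)) : Prop :=
  ∃ P₀ P₁ : Set (Set α),
    X = ⋃₀ P₀ ∪ ⋃₀ P₁ ∧
    (∀ x ∈ X, ∃ A ∈ P₀ ∪ P₁, {y ∈ X | d x y < R} ⊆ A) ∧
    ∀ A ∈ P₀ ∪ P₁, A ∈ 𝒴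

/-- `𝒳` is `r`-decomposable over `𝒴` (families of subsets of a single space). -/
def DecompS (d : α → α → ℝ) (r : ℝ) (𝒳 𝒴 : Set (Set α)) : Prop :=
  ∀ X ∈ 𝒳, PieceDecomp d r X 𝒴

/-- `𝒳` is `R`-full decomposable over `𝒴`. -/
def FullDecompS (d : α → α → ℝ) (R : ℝ) (𝒳 𝒴 : Set (Set α)) : Prop :=
  ∀ X ∈ 𝒳, PieceFullDecomp d R X 𝒴

/-- Straight finite decomposition complexity of a family of subsets of a space. -/
def sFDCS (d : α → α → ℝ) (𝒳 : Set (Set α)) : Prop :=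
  ∀ R : ℕ → ℝ, (∀ n, 0 < R n) → StrictMono R →
    ∃ (m : ℕ) (𝒴 : ℕ → Set (Set α)), 𝒴 0 = 𝒳 ∧
      (∀ i < m, DecompS d (R i) (𝒴 i) (𝒴 (i + 1))) ∧ BddS d (𝒴 m)

/-- Straight FDC of a metric space, i.e. of the singleton family `{X}`. -/
def SpaceSFDC (d : α → α → ℝ) : Prop := sFDCS d {Set.univ}

end Single

/-! ### General metric families and finite decomposition complexity -/

/-- A metric family, realized as a set of subsets of an indexed collection of spaces
`Z i`, each equipped with its distance function. -/
abbrev Fam {ι : Type*} (Z : ι → Type*) := Set ((i : ι) × Set (Z i))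

section Families

variable {ι : Type*} {Z : ι → Type*}

/-- A (uniformly) bounded metric family. -/
def Bdd (d : ∀ i, Z i → Z i → ℝ) (𝒴 : Fam Z) : Prop :=
  ∃ C : ℝ, ∀ p ∈ 𝒴, ∀ x ∈ p.2, ∀ y ∈ p.2, d p.1 x y ≤ C

/-- The metric family `𝒳` is `r`-decomposable over the metric family `𝒴`. -/
def Decomp (d : ∀ i, Z i → Z i → ℝ) (r : ℝ) (𝒳 𝒴 : Fam Z) : Prop :=
  ∀ p ∈ 𝒳, PieceDecomp (d p.1) r p.2
    {A : Set (Z p.1) | (⟨p.1, A⟩ : (i : ι) × Set (Z i)) ∈ 𝒴}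

/-- The collections `D_α` : `D_0` consists of the bounded families, and for `α > 0`,
`𝒳 ∈ D_α` iff for every `r > 0` there are `β < α` and `𝒴 ∈ D_β` with `𝒳 →_r 𝒴`. -/
def DColl (d : ∀ i, Z i → Z i → ℝ) (α : Ordinal.{0}) : Set (Fam Z) :=
  {𝒳 | (α = 0 ∧ Bdd d 𝒳) ∨
    (α ≠ 0 ∧ ∀ r : ℝ, 0 < r →
      ∃ β : Ordinal.{0}, ∃ _ : β < α, ∃ 𝒴 ∈ DColl d β, Decomp d r 𝒳 𝒴)}
  termination_by α

/-- A metric family has finite decomposition complexity if it belongs to some `D_α`. -/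
def HasFDC (d : ∀ i, Z i → Z i → ℝ) (𝒳 : Fam Z) : Prop :=
  ∃ α : Ordinal.{0}, 𝒳 ∈ DColl d α

end Families

/-- FDC of a single metric space, i.e. of the singleton family `{X}`. -/
def SpaceFDC {X : Type*} (d : X → X → ℝ) : Prop :=
  HasFDC (ι := Unit) (Z := fun _ => X) (fun _ => d) {p | p.2 = Set.univ}

/-! ### Coarse disjoint unions and box spaces -/

/-- The diameter of a space with a distance function. -/
noncomputable def diamD {X : Type*} (d : X → X → ℝ) : ℝ :=
  sSup {r : ℝ | ∃ x y : X, r = d x y}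

/-- The coarse disjoint union distance: each piece keeps its own distance, and
`d(x,y) = diam Xᵢ + diam Xⱼ + i + j` for `x ∈ Xᵢ`, `y ∈ Xⱼ` with `i ≠ j`. -/
noncomputable def cuDist {X : ℕ → Type*} (d : ∀ i, X i → X i → ℝ) :
    (Σ i, X i) → (Σ i, X i) → ℝ := fun x y =>
  if h : x.1 = y.1 then d y.1 (h ▸ x.2) y.2
  else diamD (d x.1) + diamD (d y.1) + (x.1 : ℝ) + (y.1 : ℝ)

/-- The box space `□_{Nᵢ} G` : the coarse disjoint union of the quotients `G ⧸ Nᵢ`. -/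
noncomputable def boxDist {G : Type*} [Group G] (l : G → ℝ) (N : ℕ → Subgroup G) :
    (Σ i, G ⧸ N i) → (Σ i, G ⧸ N i) → ℝ :=
  cuDist (fun i => qdist l (N i))

/-! ### Equivariance -/

section EquivGroup

variable {G : Type*} [Group G]

/-- A family of subsets of `G` is `H`-invariant if it is closed under right
translation by elements of `H`. -/
def RInvFam (H : Subgroup G) (P : Set (Set G)) : Prop :=
  ∀ U ∈ P, ∀ h ∈ H, (fun g => g * h) '' U ∈ P

/-- An `H`-invariant decomposition of a single subset of `G`. -/
def PieceDecompInv (d : G → G → ℝ) (H : Subgroup G) (r : ℝ) (X : Set G)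
    (𝒴 : Set (Set G)) : Prop :=
  ∃ P₀ P₁ : Set (Set G),
    X = ⋃₀ P₀ ∪ ⋃₀ P₁ ∧ rDisjS d r P₀ ∧ rDisjS d r P₁ ∧
    (∀ A ∈ P₀ ∪ P₁, A ∈ 𝒴) ∧ RInvFam H P₀ ∧ RInvFam H P₁

/-- An `H`-invariant decomposition `𝒳 →_r 𝒴` of families of subsets of `G`. -/
def DecompSInv (d : G → G → ℝ) (H : Subgroup G) (r : ℝ) (𝒳 𝒴 : Set (Set G)) : Prop :=
  ∀ X ∈ 𝒳, PieceDecompInv d H r X 𝒴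

/-- An `H`-invariant full decomposition of a single subset of `G`. -/
def PieceFullDecompInv (d : G → G → ℝ) (H : Subgroup G) (R : ℝ) (X : Set G)
    (𝒴 : Set (Set G)) : Prop :=
  ∃ P₀ P₁ : Set (Set G),
    X = ⋃₀ P₀ ∪ ⋃₀ P₁ ∧
    (∀ x ∈ X, ∃ A ∈ P₀ ∪ P₁, {y ∈ X | d x y < R} ⊆ A) ∧
    (∀ A ∈ P₀ ∪ P₁, A ∈ 𝒴) ∧ RInvFam H P₀ ∧ RInvFam H P₁

/-- An `H`-invariant full decomposition `𝒳 ↝_R 𝒴` of families of subsets of `G`. -/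
def FullDecompSInv (d : G → G → ℝ) (H : Subgroup G) (R : ℝ) (𝒳 𝒴 : Set (Set G)) : Prop :=
  ∀ X ∈ 𝒳, PieceFullDecompInv d H R X 𝒴

/-- `G` has equi-variant straight FDC with respect to the sequence `{Nᵢ}` : for any
increasing sequence `R₁ < R₂ < ⋯` of positive reals there are `m`, `K` and a chain
of decompositions `{G} →_{R₁} 𝒴₁ →_{R₂} ⋯ →_{R_m} 𝒴_m` with `𝒴_m` bounded and the
last decomposition `N_K`-invariant. -/
def EquivSFDC (d : G → G → ℝ) (N : ℕ → Subgroup G) : Prop :=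
  ∀ R : ℕ → ℝ, (∀ n, 0 < R n) → StrictMono R →
    ∃ m K : ℕ, 0 < m ∧ ∃ 𝒴 : ℕ → Set (Set G), 𝒴 0 = {Set.univ} ∧
      (∀ i < m, DecompS d (R i) (𝒴 i) (𝒴 (i + 1))) ∧ BddS d (𝒴 m) ∧
      DecompSInv d (N K) (R (m - 1)) (𝒴 (m - 1)) (𝒴 m)

end EquivGroup

/-! ### Stable FDC -/

/-- The distances on the members of the family `{H/K : K ⊴ H ≤ G}` : `H` carries the
metric induced from `G` and `H/K` the corresponding quotient metric. -/
noncomputable def stableD {G : Type*} [Group G] (l : G → ℝ) :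
    ∀ p : Σ H : Subgroup G, Subgroup ↥H, (↥p.1 ⧸ p.2) → (↥p.1 ⧸ p.2) → ℝ :=
  fun p => qdist (fun h : ↥p.1 => l ↑h) p.2

/-- `G` has stable FDC if the family `{H/K : K ⊴ H ≤ G}` has FDC. -/
def StableFDC (G : Type*) [Group G] (l : G → ℝ) : Prop :=
  HasFDC (stableD l)
    {q : (p : Σ H : Subgroup G, Subgroup ↥H) × Set (↥p.1 ⧸ p.2) |
      q.1.2.Normal ∧ q.2 = Set.univ}

/-! ### Coarse equivalence of metric families -/

/-- A coarse equivalence between two indexed metric families: a family of maps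
`f i : Z i → W (σ i)` which is uniformly expansive and effectively proper, admitting
a coarse embedding `g i : W (σ i) → Z i` in the opposite direction with
`d(x, g(f x)) ≤ C` and `d(y, f(g y)) ≤ C`. -/
def FamCoarseEquiv {ι κ : Type*} {Z : ι → Type*} {W : κ → Type*}
    (d : ∀ i, Z i → Z i → ℝ) (e : ∀ j, W j → W j → ℝ) : Prop :=
  ∃ (σ : ι → κ) (f : ∀ i, Z i → W (σ i)) (g : ∀ i, W (σ i) → Z i)
    (ρ₁ ρ₂ ρ₃ ρ₄ : ℝ → ℝ) (C : ℝ),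
    Monotone ρ₁ ∧ ProperFn ρ₁ ∧ Monotone ρ₂ ∧ ProperFn ρ₂ ∧
    Monotone ρ₃ ∧ ProperFn ρ₃ ∧ Monotone ρ₄ ∧ ProperFn ρ₄ ∧
    (∀ i x x', e (σ i) (f i x) (f i x') ≤ ρ₁ (d i x x')) ∧
    (∀ i x x', ρ₂ (d i x x') ≤ e (σ i) (f i x) (f i x')) ∧
    (∀ i y y', d i (g i y) (g i y') ≤ ρ₃ (e (σ i) y y')) ∧
    (∀ i y y', ρ₄ (e (σ i) y y') ≤ d i (g i y) (g i y')) ∧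
    (∀ i x, d i x (g i (f i x)) ≤ C) ∧ (∀ i y, e (σ i) y (f i (g i y)) ≤ C)

/-! ### Amenability (Følner) and elementary amenability -/

/-- Følner characterization of amenability for a countable discrete group. -/
def Amenable (G : Type*) [Group G] : Prop :=
  ∀ (F : Finset G) (ε : ℝ), 0 < ε →
    ∃ S : Finset G, S.Nonempty ∧ ∀ g ∈ F,
      letI := Classical.decEq G
      (((S.image (fun s => g * s)) ∆ S).card : ℝ) ≤ ε * (S.card : ℝ)

/-- The class of elementary amenable groups: the smallest class of groups containing
the finite groups and the abelian groups and closed under extensions and directed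
unions. -/
inductive IsElementaryAmenable : ∀ (G : Type u) [Group G], Prop where
  | of_finite (G : Type u) [Group G] (h : Finite G) : IsElementaryAmenable G
  | of_comm (G : Type u) [Group G] (h : ∀ a b : G, a * b = b * a) :
      IsElementaryAmenable G
  | of_extension (N G Q : Type u) [Group N] [Group G] [Group Q]
      (φ : N →* G) (ψ : G →* Q) (hφ : Function.Injective φ)
      (hψ : Function.Surjective ψ) (hex : φ.range = ψ.ker)
      (hN : IsElementaryAmenable N) (hQ : IsElementaryAmenable Q) :
      IsElementaryAmenable G
  | of_directedUnion (G : Type u) [Group G] (ι : Type u) (K : ι → Subgroup G)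
      (hdir : ∀ i j, ∃ k, K i ≤ K k ∧ K j ≤ K k)
      (hcover : ∀ g : G, ∃ i, g ∈ K i)
      (hK : ∀ i, IsElementaryAmenable ↥(K i)) : IsElementaryAmenable G

/-!
A piece `G ⧸ Nᵢ` sits isometrically in the box space, and FDC passes to families of
subspaces, so FDC of the box space gives FDC of `{G ⧸ Nᵢ}`. Conversely, given `r > 0` take
`m ≥ r`: the box space is the union of the finite, hence bounded, set of points in the pieces
`i < m` and of the pieces `i ≥ m`, which are `r`-disjoint because distinct pieces `i ≠ j` are at
distance at least `i + j`. These pieces are members of `{G ⧸ Nᵢ}`, so if that family lies in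
`D_α` the box space lies in `D_{α+1}`. Finally `G ⧸ N` is isometric to `⊤ ⧸ N.subgroupOf ⊤`,
a member of the stable family.
-/

section Single

variable {α : Type*} {d : α → α → ℝ}

theorem rDisjS_singleton (r : ℝ) (A : Set α) : rDisjS d r {A} := by
  rintro B rfl C rfl hne
  exact absurd rfl hne

theorem PieceDecomp.mono {r : ℝ} {X : Set α} {𝒴 𝒴' : Set (Set α)} (h : 𝒴 ⊆ 𝒴')
    (hX : PieceDecomp d r X 𝒴) : PieceDecomp d r X 𝒴' := by
  obtain ⟨P₀, P₁, hcov, h₀, h₁, hmem⟩ := hX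
  exact ⟨P₀, P₁, hcov, h₀, h₁, fun A hA => h (hmem A hA)⟩

theorem PieceDecomp.self (r : ℝ) (X : Set α) : PieceDecomp d r X {X} :=
  ⟨{X}, ∅, by simp, rDisjS_singleton r X, by simp [rDisjS], by simp⟩

theorem exists_dist_le_of_finite {S : Set α} (hS : S.Finite) :
    ∃ C, ∀ x ∈ S, ∀ y ∈ S, d x y ≤ C := by
  obtain ⟨C, hC⟩ := (hS.image2 d hS).bddAbove
  exact ⟨C, fun x hx y hy => hC (Set.mem_image2_of_mem hx hy)⟩

theorem diamD_nonneg (hd : ∀ x y, 0 ≤ d x y) : 0 ≤ diamD d :=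
  Real.sSup_nonneg (by rintro _ ⟨x, y, rfl⟩; exact hd x y)

end Single

section Families

variable {ι κ : Type*} {Z : ι → Type*} {W : κ → Type*} {d : ∀ i, Z i → Z i → ℝ}

theorem mem_DColl_iff {α : Ordinal.{0}} {𝒳 : Fam Z} :
    𝒳 ∈ DColl d α ↔ (α = 0 ∧ Bdd d 𝒳) ∨
      (α ≠ 0 ∧ ∀ r : ℝ, 0 < r →
        ∃ β : Ordinal.{0}, ∃ _ : β < α, ∃ 𝒴 ∈ DColl d β, Decomp d r 𝒳 𝒴) := by
  rw [DColl]
  rfl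

theorem Decomp.refl (r : ℝ) (𝒳 : Fam Z) : Decomp d r 𝒳 𝒳 := fun p hp =>
  (PieceDecomp.self r p.2).mono (by rintro A rfl; exact hp)

theorem DColl_mono {β α : Ordinal.{0}} (h : β ≤ α) : DColl d β ⊆ DColl d α := by
  rcases h.eq_or_lt with rfl | hlt
  · exact le_rfl
  · intro 𝒳 h𝒳
    exact mem_DColl_iff.2 <| Or.inr ⟨hlt.ne_bot, fun r _ => ⟨β, hlt, 𝒳, h𝒳, Decomp.refl r 𝒳⟩⟩

theorem mem_DColl_of_bdd {𝒳 : Fam Z} (h : Bdd d 𝒳) (α : Ordinal.{0}) : 𝒳 ∈ DColl d α :=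
  DColl_mono (zero_le (a := α)) (mem_DColl_iff.2 (Or.inl ⟨rfl, h⟩))

theorem union_mem_DColl {α : Ordinal.{0}} {𝒳 𝒴 : Fam Z} (h𝒳 : 𝒳 ∈ DColl d α)
    (h𝒴 : 𝒴 ∈ DColl d α) : 𝒳 ∪ 𝒴 ∈ DColl d α := by
  induction α using WellFoundedLT.induction generalizing 𝒳 𝒴 with
  | _ α IH =>
    rw [mem_DColl_iff] at h𝒳 h𝒴 ⊢
    rcases h𝒳 with ⟨rfl, C₁, hC₁⟩ | ⟨hne, hdec₁⟩ <;>
      rcases h𝒴 with ⟨hα, C₂, hC₂⟩ | ⟨hne', hdec₂⟩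
    · refine Or.inl ⟨rfl, max C₁ C₂, ?_⟩
      rintro p (hp | hp) x hx y hy
      · exact (hC₁ p hp x hx y hy).trans (le_max_left _ _)
      · exact (hC₂ p hp x hx y hy).trans (le_max_right _ _)
    · exact absurd rfl hne'
    · exact absurd hα hne
    · refine Or.inr ⟨hne, fun r hr => ?_⟩
      obtain ⟨β₁, hβ₁, 𝒳', h𝒳', hd₁⟩ := hdec₁ r hr
      obtain ⟨β₂, hβ₂, 𝒴', h𝒴', hd₂⟩ := hdec₂ r hr
      refine ⟨max β₁ β₂, max_lt hβ₁ hβ₂, 𝒳' ∪ 𝒴',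
        IH _ (max_lt hβ₁ hβ₂) (DColl_mono (le_max_left _ _) h𝒳')
          (DColl_mono (le_max_right _ _) h𝒴'), ?_⟩
      rintro p (hp | hp)
      · exact (hd₁ p hp).mono fun A hA => Or.inl hA
      · exact (hd₂ p hp).mono fun A hA => Or.inr hA

def IsoEmbeds (d : ∀ i, Z i → Z i → ℝ) (e : ∀ j, W j → W j → ℝ)
    (p : (i : ι) × Set (Z i)) (q : (j : κ) × Set (W j)) : Prop :=
  ∃ φ : p.2 → q.2, ∀ x y, e q.1 (φ x) (φ y) = d p.1 x y

variable {e : ∀ j, W j → W j → ℝ}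

theorem IsoEmbeds.bdd {p : (i : ι) × Set (Z i)} {q : (j : κ) × Set (W j)}
    (h : IsoEmbeds d e p q) {C : ℝ} (hC : ∀ x ∈ q.2, ∀ y ∈ q.2, e q.1 x y ≤ C) :
    ∀ x ∈ p.2, ∀ y ∈ p.2, d p.1 x y ≤ C := by
  obtain ⟨φ, hφ⟩ := h
  intro x hx y hy
  rw [← hφ ⟨x, hx⟩ ⟨y, hy⟩]
  exact hC _ (φ _).2 _ (φ _).2

theorem IsoEmbeds.pieceDecomp {p : (i : ι) × Set (Z i)} {q : (j : κ) × Set (W j)}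
    (h : IsoEmbeds d e p q) {r : ℝ} {𝒴 : Set (Set (W q.1))} (hq : PieceDecomp (e q.1) r q.2 𝒴) :
    PieceDecomp (d p.1) r p.2 {A | ∃ B ∈ 𝒴, IsoEmbeds d e ⟨p.1, A⟩ ⟨q.1, B⟩} := by
  obtain ⟨φ, hφ⟩ := h
  obtain ⟨P₀, P₁, hcov, h₀, h₁, hmem⟩ := hq
  let pull : Set (W q.1) → Set (Z p.1) := fun B => {x | ∃ hx : x ∈ p.2, (φ ⟨x, hx⟩ : W q.1) ∈ B}
  have pull_rDisj : ∀ P, rDisjS (e q.1) r P → rDisjS (d p.1) r (pull '' P) := by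
    rintro P hP _ ⟨B, hB, rfl⟩ _ ⟨B', hB', rfl⟩ hne x ⟨hx, hxB⟩ y ⟨hy, hyB⟩
    rw [← hφ ⟨x, hx⟩ ⟨y, hy⟩]
    exact hP B hB B' hB' (fun h => hne (by rw [h])) _ hxB _ hyB
  refine ⟨pull '' P₀, pull '' P₁, ?_, pull_rDisj P₀ h₀, pull_rDisj P₁ h₁, ?_⟩
  · apply Set.Subset.antisymm
    · intro x hx
      have hφx : (φ ⟨x, hx⟩ : W q.1) ∈ ⋃₀ P₀ ∪ ⋃₀ P₁ := hcov ▸ (φ ⟨x, hx⟩).2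
      rcases hφx with ⟨B, hB, hxB⟩ | ⟨B, hB, hxB⟩
      · exact Or.inl ⟨pull B, ⟨B, hB, rfl⟩, hx, hxB⟩
      · exact Or.inr ⟨pull B, ⟨B, hB, rfl⟩, hx, hxB⟩
    · rintro x (⟨-, ⟨B, -, rfl⟩, hx, -⟩ | ⟨-, ⟨B, -, rfl⟩, hx, -⟩) <;> exact hx
  · have pull_isoEmbeds : ∀ B, IsoEmbeds d e ⟨p.1, pull B⟩ ⟨q.1, B⟩ := fun B =>
      ⟨fun x => ⟨φ ⟨x, x.2.1⟩, x.2.2⟩, fun x y => hφ ⟨x, x.2.1⟩ ⟨y, y.2.1⟩⟩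
    rintro _ (⟨B, hB, rfl⟩ | ⟨B, hB, rfl⟩)
    · exact ⟨B, hmem B (Or.inl hB), pull_isoEmbeds B⟩
    · exact ⟨B, hmem B (Or.inr hB), pull_isoEmbeds B⟩

theorem mem_DColl_of_isoEmbeds {α : Ordinal.{0}} {𝒳 : Fam Z} {𝒴 : Fam W}
    (h𝒴 : 𝒴 ∈ DColl e α) (hemb : ∀ p ∈ 𝒳, ∃ q ∈ 𝒴, IsoEmbeds d e p q) : 𝒳 ∈ DColl d α := by
  induction α using WellFoundedLT.induction generalizing 𝒳 𝒴 with
  | _ α IH =>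
    rw [mem_DColl_iff] at h𝒴 ⊢
    rcases h𝒴 with ⟨rfl, C, hC⟩ | ⟨hne, hdec⟩
    · refine Or.inl ⟨rfl, C, fun p hp => ?_⟩
      obtain ⟨q, hq, hpq⟩ := hemb p hp
      exact hpq.bdd (hC q hq)
    · refine Or.inr ⟨hne, fun r hr => ?_⟩
      obtain ⟨β, hβ, 𝒴', h𝒴', hd⟩ := hdec r hr
      refine ⟨β, hβ, {p | ∃ q ∈ 𝒴', IsoEmbeds d e p q}, IH β hβ h𝒴' fun p hp => hp,
        fun p hp => ?_⟩
      obtain ⟨q, hq, hpq⟩ := hemb p hp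
      refine (hpq.pieceDecomp (hd q hq)).mono ?_
      rintro A ⟨B, hB, hAB⟩
      exact ⟨⟨q.1, B⟩, hB, hAB⟩

theorem HasFDC.of_isoEmbeds {𝒳 : Fam Z} {𝒴 : Fam W} (h𝒴 : HasFDC e 𝒴)
    (hemb : ∀ p ∈ 𝒳, ∃ q ∈ 𝒴, IsoEmbeds d e p q) : HasFDC d 𝒳 :=
  let ⟨α, hα⟩ := h𝒴
  ⟨α, mem_DColl_of_isoEmbeds hα hemb⟩

end Families

section CoarseDisjointUnion

variable {X : ℕ → Type*} {d : ∀ i, X i → X i → ℝ}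

theorem cuDist_mk_mk (i : ℕ) (x y : X i) : cuDist d ⟨i, x⟩ ⟨i, y⟩ = d i x y := by
  simp [cuDist]

theorem fst_add_fst_le_cuDist (hd : ∀ i x y, 0 ≤ d i x y) {x y : Σ i, X i} (h : x.1 ≠ y.1) :
    (x.1 + y.1 : ℝ) ≤ cuDist d x y := by
  have := diamD_nonneg (hd x.1)
  have := diamD_nonneg (hd y.1)
  simp only [cuDist, h, dite_false]
  linarith

theorem finite_setOf_fst_lt [∀ i, Finite (X i)] (m : ℕ) : {x : Σ i, X i | x.1 < m}.Finite :=
  (Set.finite_lt_nat m).preimage' fun i _ => by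
    simpa [← Set.range_sigmaMk] using Set.finite_range (Sigma.mk (β := X) i)

theorem isoEmbeds_piece_cuDist (i : ℕ) :
    IsoEmbeds d (fun _ : Unit => cuDist d) ⟨i, Set.univ⟩ ⟨(), Set.univ⟩ :=
  ⟨fun x => ⟨⟨i, x⟩, trivial⟩, fun x y => cuDist_mk_mk (d := d) i x y⟩

theorem isoEmbeds_cuDist_piece (i : ℕ) :
    IsoEmbeds (fun _ : Unit => cuDist d) d ⟨(), {x | x.1 = i}⟩ ⟨i, Set.univ⟩ := by
  refine ⟨fun x => ⟨x.2 ▸ x.1.2, trivial⟩, ?_⟩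
  rintro ⟨⟨j, x⟩, rfl : j = i⟩ ⟨⟨k, y⟩, rfl : k = j⟩
  exact (cuDist_mk_mk _ x y).symm

theorem decomp_cuDist_initial_tails (hd : ∀ i x y, 0 ≤ d i x y) {r : ℝ} {m : ℕ}
    (hrm : r ≤ m) :
    Decomp (fun _ : Unit => cuDist d) r {p | p.2 = Set.univ}
      ({p | p.2 = {x | x.1 < m}} ∪ {p | ∃ i, m ≤ i ∧ p.2 = {x | x.1 = i}}) := by
  rintro ⟨⟨⟩, A⟩ (rfl : A = Set.univ)
  refine ⟨{{x | x.1 < m}}, (fun i => {x : Σ i, X i | x.1 = i}) '' Set.Ici m, ?_,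
    rDisjS_singleton r _, ?_, ?_⟩
  · refine (Set.eq_univ_of_forall fun x => ?_).symm
    rcases lt_or_ge x.1 m with h | h
    · exact Or.inl ⟨_, rfl, h⟩
    · exact Or.inr ⟨_, ⟨x.1, h, rfl⟩, rfl⟩
  · rintro _ ⟨i, hi, rfl⟩ _ ⟨j, -, rfl⟩ hne x rfl y rfl
    have hi : (m : ℝ) ≤ x.1 := by exact_mod_cast hi
    have := fst_add_fst_le_cuDist hd (x := x) (y := y) fun h => hne (by rw [h])
    have : (0 : ℝ) ≤ y.1 := Nat.cast_nonneg _
    linarith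
  · rintro _ (rfl | ⟨i, hi, rfl⟩)
    · exact Or.inl rfl
    · exact Or.inr ⟨i, hi, rfl⟩

theorem hasFDC_of_spaceFDC_cuDist (h : SpaceFDC (cuDist d)) :
    HasFDC d {p | p.2 = Set.univ} :=
  h.of_isoEmbeds <| by
    rintro ⟨i, A⟩ (rfl : A = Set.univ)
    exact ⟨⟨(), Set.univ⟩, rfl, isoEmbeds_piece_cuDist i⟩

theorem spaceFDC_cuDist_of_hasFDC [∀ i, Finite (X i)] (hd : ∀ i x y, 0 ≤ d i x y)
    (h : HasFDC d {p | p.2 = Set.univ}) : SpaceFDC (cuDist d) := by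
  obtain ⟨α, hα⟩ := h
  refine ⟨Order.succ α, mem_DColl_iff.2 <| Or.inr ⟨(Order.lt_succ α).ne_bot, fun r _ => ?_⟩⟩
  refine ⟨α, Order.lt_succ α, _, union_mem_DColl ?_ ?_,
    decomp_cuDist_initial_tails hd (Nat.le_ceil r)⟩
  · obtain ⟨C, hC⟩ := exists_dist_le_of_finite (d := cuDist d) (finite_setOf_fst_lt (X := X) ⌈r⌉₊)
    exact mem_DColl_of_bdd ⟨C, fun p (hp : p.2 = _) => hp ▸ hC⟩ α
  · refine mem_DColl_of_isoEmbeds hα ?_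
    rintro ⟨⟨⟩, A⟩ ⟨i, -, hA : A = _⟩
    exact ⟨⟨i, Set.univ⟩, rfl, hA ▸ isoEmbeds_cuDist_piece i⟩

theorem spaceFDC_cuDist_iff [∀ i, Finite (X i)] (hd : ∀ i x y, 0 ≤ d i x y) :
    SpaceFDC (cuDist d) ↔ HasFDC d {p | p.2 = Set.univ} :=
  ⟨hasFDC_of_spaceFDC_cuDist, spaceFDC_cuDist_of_hasFDC hd⟩

end CoarseDisjointUnion

section Quotients

variable {G H : Type*} [Group G] [Group H]

theorem qdist_nonneg {l : G → ℝ} (hl : ∀ g, 0 ≤ l g) (N : Subgroup G) (x y : G ⧸ N) :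
    0 ≤ qdist l N x y :=
  Real.sInf_nonneg (by rintro _ ⟨g, h, -, -, rfl⟩; exact hl _)

theorem qdist_congr (l : H → ℝ) (N : Subgroup G) (M : Subgroup H) [N.Normal] [M.Normal]
    (e : G ≃* H) (he : N.map e = M) (x y : G ⧸ N) :
    qdist l M (QuotientGroup.congr N M e he x) (QuotientGroup.congr N M e he y) =
      qdist (fun g => l (e g)) N x y := by
  set φ := QuotientGroup.congr N M e he
  unfold qdist
  congr 1
  ext r
  constructor
  · rintro ⟨a, b, ha, hb, rfl⟩
    refine ⟨e.symm a, e.symm b, φ.injective ?_, φ.injective ?_, by simp [dl]⟩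
    · rw [QuotientGroup.congr_mk, e.apply_symm_apply, ha]
    · rw [QuotientGroup.congr_mk, e.apply_symm_apply, hb]
  · rintro ⟨g, h, rfl, rfl, rfl⟩
    exact ⟨e g, e h, (QuotientGroup.congr_mk ..).symm, (QuotientGroup.congr_mk ..).symm,
      by simp [dl]⟩

theorem hasFDC_quotients_of_stableFDC {l : G → ℝ} {N : ℕ → Subgroup G}
    (hnorm : ∀ i, (N i).Normal) (h : StableFDC G l) :
    HasFDC (fun i => qdist l (N i)) {p | p.2 = Set.univ} := by
  refine h.of_isoEmbeds ?_
  rintro ⟨i, A⟩ (rfl : A = Set.univ)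
  have he : (N i).map (Subgroup.topEquiv.symm : G ≃* (⊤ : Subgroup G)) = (N i).subgroupOf ⊤ := by
    ext ⟨g, _⟩
    simp [Subgroup.mem_subgroupOf, Subtype.ext_iff]
  have hnormTop := (hnorm i).subgroupOf ⊤
  refine ⟨⟨⟨⊤, (N i).subgroupOf ⊤⟩, Set.univ⟩, ⟨hnormTop, rfl⟩,
    fun x => ⟨QuotientGroup.congr _ _ _ he x, trivial⟩, fun x y => ?_⟩
  exact qdist_congr (fun h : (⊤ : Subgroup G) => l h) (N i) _ _ he x y

end Quotients

theorem boxSpace_fdc_iff_family_fdc_general {G : Type*} [Group G]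
    (l : G → ℝ) (hl : IsLengthFunction l) (N : ℕ → Subgroup G)
    (hnorm : ∀ i, (N i).Normal) (hfin : ∀ i, (N i).FiniteIndex) :
    (SpaceFDC (boxDist l N) ↔
      HasFDC (fun i => qdist l (N i))
        {p : (i : ℕ) × Set (G ⧸ N i) | p.2 = Set.univ}) ∧
    (StableFDC G l → SpaceFDC (boxDist l N)) := by
  have : ∀ i, Finite (G ⧸ N i) := fun i => Subgroup.finite_quotient_of_finiteIndex
  have hbox := spaceFDC_cuDist_iff fun i => qdist_nonneg hl.nonneg (N i)
  exact ⟨hbox, fun h => hbox.2 (hasFDC_quotients_of_stableFDC hnorm h)⟩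

/-- Lemma `box lem`: the box space `□_{Nᵢ} G` has FDC iff the
metric family `{G/Nᵢ}` has FDC; in particular, if `G` has stable FDC then the box
space has FDC. -/
theorem boxSpace_fdc_iff_family_fdc {G : Type*} [Group G] [Countable G]
    (l : G → ℝ) (hl : IsLengthFunction l) (N : ℕ → Subgroup G)
    (hnorm : ∀ i, (N i).Normal) (hmono : ∀ i, N (i + 1) ≤ N i) (h0 : N 0 = ⊤)
    (hfin : ∀ i, (N i).FiniteIndex) (htriv : ∀ g : G, (∀ i, g ∈ N i) → g = 1) :
    (SpaceFDC (boxDist l N) ↔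
      HasFDC (fun i => qdist l (N i))
        {p : (i : ℕ) × Set (G ⧸ N i) | p.2 = Set.univ}) ∧
    (StableFDC G l → SpaceFDC (boxDist l N)) :=
  boxSpace_fdc_iff_family_fdc_general l hl N hnorm hfin

end FDCPaper
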